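/- Let H_k be the k×k tridiagonal matrix with diagonal (2, 2, …, 2, 3) (all 2's except the last entry, which is 3) and all sub- and super-diagonal entries equal to -1. Then the eigenvalues of H_k are 2 + 2cos(2jπ/(2k+1)) for j = 1, …, k. -/

import Mathlib

/-!
For `1 ≤ j ≤ k` let `θ = π - 2jπ/(2k+1)` and `w n = cos ((n + 1/2) θ)` for `n : ℤ`. Then
`w (n - 1) + w (n + 1) = 2 cos θ · w n`; the reflection symmetry `w (-1) = w 0` accounts for the
missing left neighbour of the first vertex, and `w k = 0` for the unit added to the last diagonal
entry. So `(w 0, …, w (k-1))` is an eigenvector of `H_k` for the eigenvalue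
`2 - 2 cos θ = 2 + 2 cos (2jπ/(2k+1))`. The `k` angles `2jπ/(2k+1)` lie in `[0, π]`, where `cos`
is injective, so these are `k` distinct roots of the degree-`k` characteristic polynomial, hence
all of them.
-/

open scoped Classical

/-- `H_k = L(P_k) + e_k e_kᵀ`, the path Laplacian with one unit added to the last
diagonal entry. -/
noncomputable def HkMat (k : ℕ) : Matrix (Fin k) (Fin k) ℝ :=
  (SimpleGraph.pathGraph k).lapMatrix ℝ +
    Matrix.diagonal (fun i : Fin k => if (i : ℕ) = k - 1 then 1 else 0)

open Real Matrix

theorem Matrix.isRoot_charpoly_of_mulVec_eq_smul {n R : Type*} [Fintype n] [DecidableEq n]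
    [CommRing R] [IsDomain R] {A : Matrix n n R} {μ : R} {v : n → R} (hv : v ≠ 0)
    (h : A *ᵥ v = μ • v) : A.charpoly.IsRoot μ := by
  rw [Polynomial.IsRoot, eval_charpoly, ← exists_mulVec_eq_zero_iff]
  exact ⟨v, hv, by rw [sub_mulVec, h, scalar_apply, diagonal_const_mulVec, sub_self]⟩

theorem Matrix.charpoly_roots_eq_of_nodup {n R : Type*} [Fintype n] [DecidableEq n]
    [CommRing R] [IsDomain R] {A : Matrix n n R} {s : Multiset R} (hs : s.Nodup)
    (hcard : Fintype.card n ≤ Multiset.card s)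
    (heig : ∀ μ ∈ s, ∃ v ≠ 0, A *ᵥ v = μ • v) :
    A.charpoly.roots = s := by
  have hsub : s ≤ A.charpoly.roots := (Multiset.le_iff_subset hs).2 fun μ hμ => by
    obtain ⟨v, hv, h⟩ := heig μ hμ
    exact (Polynomial.mem_roots A.charpoly_monic.ne_zero).2 (isRoot_charpoly_of_mulVec_eq_smul hv h)
  refine (Multiset.eq_of_le_of_card_le hsub ?_).symm
  calc Multiset.card A.charpoly.roots ≤ A.charpoly.natDegree := A.charpoly.card_roots'
    _ = Fintype.card n := A.charpoly_natDegree_eq_dim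
    _ ≤ Multiset.card s := hcard

theorem Fin.sum_ite_intCast_eq {M : Type*} [AddCommMonoid M] (k : ℕ) (g : ℤ → M) (z : ℤ) :
    (∑ u : Fin k, if (u : ℤ) = z then g u else 0) = if 0 ≤ z ∧ z < k then g z else 0 := by
  split_ifs with hz
  · lift z to ℕ using hz.1
    rw [Finset.sum_eq_single_of_mem ⟨z, by omega⟩ (Finset.mem_univ _)]
    · simp
    · intro u _ hu
      exact if_neg fun h => hu (Fin.ext (by exact_mod_cast h))
  · exact Finset.sum_eq_zero fun u _ => if_neg (by omega)

theorem SimpleGraph.pathGraph_sum_neighborFinset {M : Type*} [AddCommGroup M] {k : ℕ}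
    (g : ℤ → M) (i : Fin k) :
    ∑ u ∈ (pathGraph k).neighborFinset i, g u =
      (if 0 < (i : ℕ) then g (i - 1) else 0) + (if (i : ℕ) + 1 < k then g (i + 1) else 0) := by
  have hadj : ∀ u : Fin k, (pathGraph k).Adj i u ↔ (u : ℤ) = i - 1 ∨ (u : ℤ) = i + 1 := by
    intro u; rw [pathGraph_adj]; omega
  have hsplit : ∀ u : Fin k, (if (pathGraph k).Adj i u then g u else 0) =
      (if (u : ℤ) = i - 1 then g u else 0) + (if (u : ℤ) = i + 1 then g u else 0) := by
    intro u
    by_cases h₁ : (u : ℤ) = i - 1 <;> by_cases h₂ : (u : ℤ) = i + 1 <;>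
      simp [hadj, h₁, h₂] <;> omega
  rw [neighborFinset_eq_filter, Finset.sum_filter, Finset.sum_congr rfl fun u _ => hsplit u,
    Finset.sum_add_distrib, Fin.sum_ite_intCast_eq, Fin.sum_ite_intCast_eq]
  congr 1 <;> exact if_congr (by omega) rfl rfl

theorem HkMat_mulVec_apply {k : ℕ} {w : ℤ → ℝ} (h₀ : w (-1) = w 0) (hk : w k = 0)
    (i : Fin k) :
    (HkMat k *ᵥ fun u => w u) i = 2 * w i - w (i - 1) - w (i + 1) := by
  have hlap : ((SimpleGraph.pathGraph k).lapMatrix ℝ *ᵥ fun u => w u) i =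
      ∑ u ∈ (SimpleGraph.pathGraph k).neighborFinset i, (w i - w u) := by
    rw [SimpleGraph.lapMatrix_mulVec_apply, Finset.sum_sub_distrib, Finset.sum_const,
      SimpleGraph.card_neighborFinset_eq_degree, nsmul_eq_mul]
  have hfirst : (if 0 < (i : ℕ) then w i - w (i - 1) else 0) = w i - w (i - 1) := by
    split_ifs with h
    · rfl
    · rw [show ((i : ℕ) : ℤ) - 1 = -1 by omega, h₀, show ((i : ℕ) : ℤ) = 0 by omega,
        sub_self]
  have hlast : (if (i : ℕ) + 1 < k then w i - w (i + 1) else 0) +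
      (if (i : ℕ) = k - 1 then 1 else 0) * w i = w i - w (i + 1) := by
    have := i.isLt
    split_ifs with h h'
    · omega
    · ring
    · rw [show ((i : ℕ) : ℤ) + 1 = k by omega, hk]; ring
    · omega
  rw [HkMat, add_mulVec, Pi.add_apply, mulVec_diagonal, hlap,
    SimpleGraph.pathGraph_sum_neighborFinset (fun z => w i - w z), hfirst, add_assoc, hlast]
  ring

theorem HkMat_mulVec_eq_smul_of_recurrence {k : ℕ} {μ : ℝ} {w : ℤ → ℝ}
    (hrec : ∀ n : ℤ, w (n - 1) + w (n + 1) = (2 - μ) * w n) (h₀ : w (-1) = w 0)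
    (hk : w k = 0) :
    HkMat k *ᵥ (fun u : Fin k => w u) = μ • fun u : Fin k => w u := by
  ext i
  rw [HkMat_mulVec_apply h₀ hk, Pi.smul_apply, smul_eq_mul]
  linarith [hrec i]

theorem HkMat_mulVec_cos_eq_smul (k : ℕ) {θ : ℝ} (hθ : cos ((k + 1 / 2) * θ) = 0) :
    HkMat k *ᵥ (fun u : Fin k => cos ((u + 1 / 2) * θ)) =
      (2 - 2 * cos θ) • fun u : Fin k => cos ((u + 1 / 2) * θ) := by
  have h := HkMat_mulVec_eq_smul_of_recurrence (k := k) (μ := 2 - 2 * cos θ)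
    (w := fun n => cos ((n + 1 / 2) * θ)) (fun n => ?_) ?_ (by exact_mod_cast hθ)
  · exact_mod_cast h
  · rw [cos_add_cos]; push_cast; ring_nf; rw [cos_neg]
  · rw [← cos_neg]; push_cast; ring_nf

theorem exists_HkMat_mulVec_eq_smul {k j : ℕ} (hj : j ∈ Finset.Icc 1 k) :
    ∃ v ≠ 0, HkMat k *ᵥ v = (2 + 2 * cos (2 * j * π / (2 * k + 1))) • v := by
  obtain ⟨hj₁, hjk⟩ := Finset.mem_Icc.1 hj
  set θ := π - 2 * j * π / (2 * k + 1)
  -- `(k + 1/2) θ = (k - j + 1/2) π`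
  have hθ : cos ((k + 1 / 2) * θ) = 0 :=
    cos_eq_zero_iff.2 ⟨k - j, by simp only [θ]; field_simp; push_cast; ring⟩
  refine ⟨_, fun h => ?_, (HkMat_mulVec_cos_eq_smul k hθ).trans (by rw [cos_pi_sub]; ring_nf)⟩
  have hpos : 0 < cos (2⁻¹ * θ) := by
    have hθ₂ : 2⁻¹ * θ = π / 2 - j * π / (2 * k + 1) := by simp only [θ]; ring
    have hlt : (j : ℝ) * π / (2 * k + 1) < π := by
      rw [div_lt_iff₀ (by positivity)]
      nlinarith [pi_pos, (by exact_mod_cast hjk : (j : ℝ) ≤ k)]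
    have hgt : 0 < (j : ℝ) * π / (2 * k + 1) := by
      have : (1 : ℝ) ≤ j := by exact_mod_cast hj₁
      positivity
    exact cos_pos_of_mem_Ioo ⟨by linarith, by linarith⟩
  simpa [hpos.ne'] using congrFun h ⟨0, by omega⟩

theorem injOn_cos_two_mul_pi_div (k : ℕ) :
    Set.InjOn (fun j : ℕ => cos (2 * j * π / (2 * k + 1))) (Set.Iic k) := by
  have hmem : ∀ j ∈ Set.Iic k, 2 * (j : ℝ) * π / (2 * k + 1) ∈ Set.Icc 0 π := by
    intro j hj
    have : (j : ℝ) ≤ k := by exact_mod_cast hj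
    refine ⟨by positivity, (div_le_iff₀ (by positivity)).2 (by nlinarith [pi_pos])⟩
  intro a ha b hb hab
  have h := injOn_cos (hmem a ha) (hmem b hb) hab
  field_simp at h
  exact_mod_cast h

theorem spectrum_Hk_general (k : ℕ) :
    (HkMat k).charpoly.roots =
      (Finset.Icc 1 k).val.map
        (fun j : ℕ => 2 + 2 * Real.cos (2 * (j : ℝ) * Real.pi / (2 * (k : ℝ) + 1))) := by
  refine charpoly_roots_eq_of_nodup ((Finset.Icc 1 k).nodup.map_on fun a ha b hb hab => ?_)
    (by simp) ?_
  · have hIic : ∀ j ∈ Finset.Icc 1 k, j ∈ Set.Iic k := fun j hj => (Finset.mem_Icc.1 hj).2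
    exact injOn_cos_two_mul_pi_div k (hIic a ha) (hIic b hb) (by simpa using hab)
  · simp only [Multiset.mem_map, Finset.mem_val]
    rintro _ ⟨j, hj, rfl⟩
    exact exists_HkMat_mulVec_eq_smul hj

/-- The eigenvalues of `H_k` are `2 + 2cos(2jπ/(2k+1))` for `j = 1,…,k`. -/
theorem spectrum_Hk (k : ℕ) (hk : 0 < k) :
    (HkMat k).charpoly.roots =
      (Finset.Icc 1 k).val.map
        (fun j : ℕ => 2 + 2 * Real.cos (2 * (j : ℝ) * Real.pi / (2 * (k : ℝ) + 1))) :=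
  spectrum_Hk_general k
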